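/- For all x > 0 and K > 0, the integrated Black–Scholes gamma over all total variances equals twice the minimum of spot and strike: x ∫_0^∞ λ^{−1/2} φ( ln(x/K)/√λ + √λ/2 ) dλ = 2 min(x, K), where φ(a) = (2π)^{−1/2} e^{−a²/2}. Equivalently, ∫_0^∞ x² Ĉ_{xx}(λ, x) dλ = 2 min(x, K), with Ĉ_{xx}(λ, x) = φ(d(λ, x))/(x√λ) and d(λ, x) = ln(x/K)/√λ + √λ/2. -/

import Mathlib

open MeasureTheory Set Filter Real Topology

/-- Standard normal density φ(a) = (2π)^{−1/2} e^{−a²/2}. -/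
noncomputable def stdNormalPdf (a : ℝ) : ℝ :=
  (Real.sqrt (2 * Real.pi))⁻¹ * Real.exp (-(a ^ 2) / 2)

/-- Standard normal distribution function Φ(a) = ∫_{−∞}^a φ(s) ds. -/
noncomputable def stdNormalCdf (a : ℝ) : ℝ :=
  ∫ s in Set.Iio a, stdNormalPdf s

/-- d(λ, x) = ln(x/K)/√λ + √λ/2. -/
noncomputable def bsD (K lam x : ℝ) : ℝ :=
  Real.log (x / K) / Real.sqrt lam + Real.sqrt lam / 2

/-- Black–Scholes call price with strike K, zero interest rate and total
remaining variance λ: Ĉ(λ, x) = x Φ(d(λ, x)) − K Φ(d(λ, x) − √λ). -/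
noncomputable def bsPrice (K lam x : ℝ) : ℝ :=
  x * stdNormalCdf (bsD K lam x) - K * stdNormalCdf (bsD K lam x - Real.sqrt lam)

/- STATEMENT 19: For all x > 0 and K > 0, the integrated Black–Scholes gamma
   over all total variances equals twice the minimum of spot and strike:
   x ∫_0^∞ λ^{−1/2} φ(ln(x/K)/√λ + √λ/2) dλ = 2 min(x, K), i.e.
   ∫_0^∞ x² Ĉ_{xx}(λ, x) dλ = 2 min(x, K) with Ĉ_{xx}(λ,x) = φ(d(λ,x))/(x√λ). -/

section AuxProofs

lemma pdf_cont : Continuous stdNormalPdf := by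
  unfold stdNormalPdf; fun_prop

lemma pdf_nonneg (a : ℝ) : 0 ≤ stdNormalPdf a := by
  unfold stdNormalPdf
  positivity

lemma pdf_eq (a : ℝ) : stdNormalPdf a = (Real.sqrt (2 * Real.pi))⁻¹ * Real.exp (-(1/2) * a ^ 2) := by
  unfold stdNormalPdf; ring_nf

lemma pdf_integrable : Integrable stdNormalPdf := by
  have : Integrable (fun a : ℝ => Real.exp (-(1/2) * a ^ 2)) := integrable_exp_neg_mul_sq (by norm_num)
  have h2 := this.const_mul (Real.sqrt (2 * Real.pi))⁻¹
  refine h2.congr ?_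
  filter_upwards with a
  rw [pdf_eq]

lemma pdf_integral : ∫ a : ℝ, stdNormalPdf a = 1 := by
  have h := integral_gaussian (1/2 : ℝ)
  simp only [pdf_eq]
  rw [MeasureTheory.integral_const_mul]
  simp only [neg_mul] at h ⊢
  rw [h]
  rw [show Real.pi/(1/2) = 2 * Real.pi by ring]
  rw [inv_mul_cancel₀ (by positivity)]

lemma cdf_eq_Iic (a : ℝ) : stdNormalCdf a = ∫ s in Iic a, stdNormalPdf s :=
  (integral_Iic_eq_integral_Iio).symm

lemma cdf_eq (a : ℝ) :
    stdNormalCdf a = stdNormalCdf 0 + ∫ s in (0:ℝ)..a, stdNormalPdf s := by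
  rw [cdf_eq_Iic, cdf_eq_Iic,
    ← intervalIntegral.integral_Iic_sub_Iic pdf_integrable.integrableOn pdf_integrable.integrableOn]
  ring

lemma cdf_hasDerivAt (a : ℝ) : HasDerivAt stdNormalCdf (stdNormalPdf a) a := by
  have h : HasDerivAt (fun b => ∫ s in (0:ℝ)..b, stdNormalPdf s) (stdNormalPdf a) a :=
    intervalIntegral.integral_hasDerivAt_right pdf_integrable.intervalIntegrable
      (pdf_cont.stronglyMeasurableAtFilter _ _) pdf_cont.continuousAt
  have h2 := h.const_add (stdNormalCdf 0)
  have : (fun b => stdNormalCdf 0 + ∫ s in (0:ℝ)..b, stdNormalPdf s) = stdNormalCdf := by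
    funext b; exact (cdf_eq b).symm
  rwa [this] at h2

lemma cdf_tendsto_atTop : Tendsto stdNormalCdf atTop (𝓝 1) := by
  have h := MeasureTheory.intervalIntegral_tendsto_integral_Ioi 0
    (pdf_integrable.integrableOn) tendsto_id
  have h2 : Tendsto (fun b => stdNormalCdf 0 + ∫ s in (0:ℝ)..b, stdNormalPdf s) atTop
      (𝓝 (stdNormalCdf 0 + ∫ s in Ioi (0:ℝ), stdNormalPdf s)) := (tendsto_const_nhds.add h)
  have e1 : stdNormalCdf 0 + ∫ s in Ioi (0:ℝ), stdNormalPdf s = 1 := by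
    rw [cdf_eq_Iic,
      intervalIntegral.integral_Iic_add_Ioi pdf_integrable.integrableOn pdf_integrable.integrableOn, pdf_integral]
  rw [e1] at h2
  refine h2.congr fun b => (cdf_eq b).symm

lemma pdf_even (a : ℝ) : stdNormalPdf (-a) = stdNormalPdf a := by
  unfold stdNormalPdf; rw [neg_pow]; norm_num

lemma cdf_neg (a : ℝ) : stdNormalCdf (-a) = 1 - stdNormalCdf a := by
  have h := integral_comp_neg_Ioi a stdNormalPdf
  simp_rw [pdf_even] at h
  rw [cdf_eq_Iic, ← h, eq_sub_iff_add_eq, cdf_eq_Iic, add_comm,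
    intervalIntegral.integral_Iic_add_Ioi pdf_integrable.integrableOn pdf_integrable.integrableOn, pdf_integral]

lemma cdf_tendsto_atBot : Tendsto stdNormalCdf atBot (𝓝 0) := by
  have h : Tendsto (fun a : ℝ => 1 - stdNormalCdf (-a)) atBot (𝓝 (1 - 1)) :=
    tendsto_const_nhds.sub (cdf_tendsto_atTop.comp tendsto_neg_atBot_atTop)
  norm_num at h
  refine h.congr fun a => ?_
  rw [cdf_neg]; ring


lemma bs_identity {K x lam : ℝ} (hK : 0 < K) (hx : 0 < x) (hlam : 0 < lam) :
    K * stdNormalPdf (bsD K lam x - Real.sqrt lam) = x * stdNormalPdf (bsD K lam x) := by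
  set s := Real.sqrt lam with hs
  have hspos : 0 < s := Real.sqrt_pos.2 hlam
  set m := Real.log (x / K) with hm
  set d := bsD K lam x with hd
  have hds : d * s = m + s ^ 2 / 2 := by
    rw [hd, bsD, ← hs, ← hm, add_mul, div_mul_cancel₀ _ hspos.ne', div_mul_eq_mul_div, ← sq]
  have h2 : -((d - s) ^ 2) / 2 = -(d ^ 2) / 2 + m := by linear_combination hds
  unfold stdNormalPdf
  rw [h2, Real.exp_add, Real.exp_log (div_pos hx hK)]
  field_simp

lemma bs_hasDerivAt {K x lam : ℝ} (hK : 0 < K) (hx : 0 < x) (hlam : 0 < lam) :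
    HasDerivAt (fun l => bsPrice K l x)
      (lam ^ (-(1 / 2) : ℝ) * stdNormalPdf (bsD K lam x) * (x / 2)) lam := by
  set s := Real.sqrt lam with hs
  have hspos : 0 < s := Real.sqrt_pos.2 hlam
  set m := Real.log (x / K) with hm
  have hsq : HasDerivAt Real.sqrt (1 / (2 * s)) lam := Real.hasDerivAt_sqrt hlam.ne'
  have hinv : HasDerivAt (fun l => (Real.sqrt l)⁻¹) (-(1 / (2 * s)) / s ^ 2) lam :=
    hsq.inv hspos.ne'
  set D : ℝ := m * (-(1 / (2 * s)) / s ^ 2) + 1 / (2 * s) / 2 with hD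
  have hdfun : (fun l => bsD K l x) = fun l => m * (Real.sqrt l)⁻¹ + Real.sqrt l / 2 := by
    funext l; rw [bsD, div_eq_mul_inv, ← hm]
  have hd : HasDerivAt (fun l => bsD K l x) D lam := by
    rw [hdfun, hD]
    exact (hinv.const_mul m).add (hsq.div_const 2)
  have h1 : HasDerivAt (fun l => stdNormalCdf (bsD K l x))
      (stdNormalPdf (bsD K lam x) * D) lam := HasDerivAt.comp (h₂ := stdNormalCdf) lam (cdf_hasDerivAt (bsD K lam x)) hd
  have h2 : HasDerivAt (fun l => stdNormalCdf (bsD K l x - Real.sqrt l))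
      (stdNormalPdf (bsD K lam x - s) * (D - 1 / (2 * s))) lam :=
    HasDerivAt.comp (h₂ := stdNormalCdf) (h := fun l => bsD K l x - Real.sqrt l) lam (cdf_hasDerivAt (bsD K lam x - s)) (hd.sub hsq)
  have hF : HasDerivAt (fun l => bsPrice K l x)
      (x * (stdNormalPdf (bsD K lam x) * D)
        - K * (stdNormalPdf (bsD K lam x - s) * (D - 1 / (2 * s)))) lam := by
    have := (h1.const_mul x).sub (h2.const_mul K)
    exact this
  convert hF using 1
  have hid := bs_identity hK hx hlam
  rw [← hs] at hid
  have hrpow : lam ^ (-(1 / 2) : ℝ) = s⁻¹ := by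
    rw [Real.rpow_neg hlam.le, hs, Real.sqrt_eq_rpow]
  rw [hrpow]
  have : K * (stdNormalPdf (bsD K lam x - s) * (D - 1 / (2 * s)))
      = x * stdNormalPdf (bsD K lam x) * (D - 1 / (2 * s)) := by
    rw [← mul_assoc, hid]
  rw [this]
  field_simp
  ring

lemma sqrt_tendsto_atTop : Tendsto Real.sqrt atTop atTop :=
  (tendsto_rpow_atTop one_half_pos).congr fun y => (Real.sqrt_eq_rpow y).symm

lemma bsD_atTop (K x : ℝ) : Tendsto (fun l => bsD K l x) atTop atTop := by
  have h1 : Tendsto (fun l : ℝ => Real.log (x / K) / Real.sqrt l) atTop (𝓝 0) :=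
    tendsto_const_nhds.div_atTop sqrt_tendsto_atTop
  have h2 : Tendsto (fun l : ℝ => Real.sqrt l / 2) atTop atTop :=
    sqrt_tendsto_atTop.atTop_div_const two_pos
  exact h1.add_atTop h2

lemma bsD_sub_atBot (K x : ℝ) : Tendsto (fun l => bsD K l x - Real.sqrt l) atTop atBot := by
  have h1 : Tendsto (fun l : ℝ => Real.log (x / K) / Real.sqrt l) atTop (𝓝 0) :=
    tendsto_const_nhds.div_atTop sqrt_tendsto_atTop
  have h2 : Tendsto (fun l : ℝ => -(Real.sqrt l / 2)) atTop atBot :=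
    tendsto_neg_atTop_atBot.comp (sqrt_tendsto_atTop.atTop_div_const two_pos)
  have := h1.add_atBot h2
  refine this.congr fun l => ?_
  rw [bsD]; ring

lemma bsPrice_tendsto_atTop {K x : ℝ} (hK : 0 < K) (hx : 0 < x) :
    Tendsto (fun l => bsPrice K l x) atTop (𝓝 x) := by
  have h1 : Tendsto (fun l => stdNormalCdf (bsD K l x)) atTop (𝓝 1) :=
    cdf_tendsto_atTop.comp (bsD_atTop K x)
  have h2 : Tendsto (fun l => stdNormalCdf (bsD K l x - Real.sqrt l)) atTop (𝓝 0) :=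
    cdf_tendsto_atBot.comp (bsD_sub_atBot K x)
  have := (h1.const_mul x).sub (h2.const_mul K)
  simpa [bsPrice] using this

lemma sqrt_tendsto_zero_within : Tendsto Real.sqrt (𝓝[>] (0:ℝ)) (𝓝[>] (0:ℝ)) := by
  rw [tendsto_nhdsWithin_iff]
  constructor
  · exact (Real.continuous_sqrt.tendsto' 0 0 Real.sqrt_zero).mono_left nhdsWithin_le_nhds
  · exact eventually_mem_nhdsWithin.mono fun l hl => Real.sqrt_pos.2 hl

lemma sqrt_tendsto_zero : Tendsto Real.sqrt (𝓝[>] (0:ℝ)) (𝓝 0) :=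
  sqrt_tendsto_zero_within.mono_right nhdsWithin_le_nhds

lemma bsPrice_tendsto_zero {K x : ℝ} (hK : 0 < K) (hx : 0 < x) :
    Tendsto (fun l => bsPrice K l x) (𝓝[>] (0:ℝ)) (𝓝 (max (x - K) 0)) := by
  set m := Real.log (x / K) with hm
  have hinv : Tendsto (fun l : ℝ => (Real.sqrt l)⁻¹) (𝓝[>] (0:ℝ)) atTop :=
    tendsto_inv_nhdsGT_zero.comp sqrt_tendsto_zero_within
  have hbsD : ∀ l : ℝ, bsD K l x = (Real.sqrt l)⁻¹ * m + Real.sqrt l / 2 := by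
    intro l; rw [bsD, div_eq_mul_inv, ← hm]; ring
  rcases lt_trichotomy x K with hcmp | hcmp | hcmp
  · -- x < K : price → 0
    have hmneg : m < 0 := Real.log_neg (div_pos hx hK) ((div_lt_one hK).2 hcmp)
    have h1 : Tendsto (fun l : ℝ => (Real.sqrt l)⁻¹ * m) (𝓝[>] (0:ℝ)) atBot :=
      hinv.atTop_mul_const_of_neg hmneg
    have hD : Tendsto (fun l => bsD K l x) (𝓝[>] (0:ℝ)) atBot := by
      have := h1.atBot_add (sqrt_tendsto_zero.div_const 2)
      exact this.congr fun l => (hbsD l).symm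
    have hD2 : Tendsto (fun l => bsD K l x - Real.sqrt l) (𝓝[>] (0:ℝ)) atBot :=
      hD.atBot_add (sqrt_tendsto_zero.neg)
    have h2 : Tendsto (fun l => x * stdNormalCdf (bsD K l x)
        - K * stdNormalCdf (bsD K l x - Real.sqrt l)) (𝓝[>] (0:ℝ)) (𝓝 (x * 0 - K * 0)) :=
      ((cdf_tendsto_atBot.comp hD).const_mul x).sub ((cdf_tendsto_atBot.comp hD2).const_mul K)
    have hmax : max (x - K) 0 = 0 := max_eq_right (by linarith)
    rw [hmax]
    simpa [bsPrice] using h2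
  · -- x = K
    subst hcmp
    have hm0 : m = 0 := by rw [hm, div_self hx.ne', Real.log_one]
    have hD : Tendsto (fun l => bsD x l x) (𝓝[>] (0:ℝ)) (𝓝 0) := by
      have h0 : Tendsto (fun l : ℝ => Real.sqrt l / 2) (𝓝[>] (0:ℝ)) (𝓝 0) := by
        simpa using sqrt_tendsto_zero.div_const 2
      refine h0.congr fun l => ?_
      rw [hbsD l, hm0, mul_zero, zero_add]
    have hD2 : Tendsto (fun l => bsD x l x - Real.sqrt l) (𝓝[>] (0:ℝ)) (𝓝 0) := by
      simpa using hD.sub sqrt_tendsto_zero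
    have hc : Tendsto stdNormalCdf (𝓝 (0:ℝ)) (𝓝 (stdNormalCdf 0)) :=
      (cdf_hasDerivAt 0).continuousAt.tendsto
    have h2 : Tendsto (fun l => x * stdNormalCdf (bsD x l x)
        - x * stdNormalCdf (bsD x l x - Real.sqrt l)) (𝓝[>] (0:ℝ))
        (𝓝 (x * stdNormalCdf 0 - x * stdNormalCdf 0)) :=
      ((hc.comp hD).const_mul x).sub ((hc.comp hD2).const_mul x)
    have hmax : max (x - x) 0 = 0 := by simp
    rw [hmax]
    have : x * stdNormalCdf 0 - x * stdNormalCdf 0 = 0 := by ring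
    rw [this] at h2
    simpa [bsPrice] using h2
  · -- K < x : price → x - K
    have hmpos : 0 < m := Real.log_pos ((one_lt_div hK).2 hcmp)
    have h1 : Tendsto (fun l : ℝ => (Real.sqrt l)⁻¹ * m) (𝓝[>] (0:ℝ)) atTop :=
      hinv.atTop_mul_const hmpos
    have hD : Tendsto (fun l => bsD K l x) (𝓝[>] (0:ℝ)) atTop := by
      have := h1.atTop_add (sqrt_tendsto_zero.div_const 2)
      exact this.congr fun l => (hbsD l).symm
    have hD2 : Tendsto (fun l => bsD K l x - Real.sqrt l) (𝓝[>] (0:ℝ)) atTop :=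
      hD.atTop_add (sqrt_tendsto_zero.neg)
    have h2 : Tendsto (fun l => x * stdNormalCdf (bsD K l x)
        - K * stdNormalCdf (bsD K l x - Real.sqrt l)) (𝓝[>] (0:ℝ)) (𝓝 (x * 1 - K * 1)) :=
      ((cdf_tendsto_atTop.comp hD).const_mul x).sub ((cdf_tendsto_atTop.comp hD2).const_mul K)
    have hmax : max (x - K) 0 = x - K := max_eq_left (by linarith)
    rw [hmax]
    simpa [bsPrice] using h2

end AuxProofs

theorem bs_integrated_gamma (K x : ℝ) (hK : 0 < K) (hx : 0 < x) :
    x * ∫ lam in Set.Ioi (0 : ℝ),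
        lam ^ (-(1 / 2) : ℝ) * stdNormalPdf (bsD K lam x)
      = 2 * min x K := by
  set g : ℝ → ℝ := fun l => if l ≤ 0 then 2 / x * max (x - K) 0 else 2 / x * bsPrice K l x
    with hg
  have hg0 : g 0 = 2 / x * max (x - K) 0 := if_pos le_rfl
  have hderiv : ∀ l ∈ Ioi (0:ℝ),
      HasDerivAt g (l ^ (-(1 / 2) : ℝ) * stdNormalPdf (bsD K l x)) l := by
    intro l hl
    have hev : (fun l' => 2 / x * bsPrice K l' x) =ᶠ[𝓝 l] g := by
      filter_upwards [Ioi_mem_nhds hl] with l' hl'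
      rw [hg]
      exact (if_neg (not_le.2 hl')).symm
    have h := ((bs_hasDerivAt hK hx hl).const_mul (2 / x)).congr_of_eventuallyEq hev.symm
    refine h.congr_deriv ?_
    field_simp
  have g'nonneg : ∀ l ∈ Ioi (0:ℝ),
      0 ≤ l ^ (-(1 / 2) : ℝ) * stdNormalPdf (bsD K l x) := fun l hl =>
    mul_nonneg (Real.rpow_nonneg (le_of_lt hl) _) (pdf_nonneg _)
  have hcont : ContinuousWithinAt g (Ici (0:ℝ)) 0 := by
    rw [← Set.Ioi_insert, continuousWithinAt_insert_self]
    show Tendsto g (𝓝[>] (0:ℝ)) (𝓝 (g 0))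
    rw [hg0]
    refine (Filter.Tendsto.const_mul (2 / x) (bsPrice_tendsto_zero hK hx)).congr' ?_
    filter_upwards [self_mem_nhdsWithin] with l hl
    rw [hg]
    exact (if_neg (not_le.2 hl)).symm
  have htop : Tendsto g atTop (𝓝 (2 / x * x)) := by
    refine (Filter.Tendsto.const_mul (2 / x) (bsPrice_tendsto_atTop hK hx)).congr' ?_
    filter_upwards [Ioi_mem_atTop (0:ℝ)] with l hl
    rw [hg]
    exact (if_neg (not_le.2 hl)).symm
  have key := integral_Ioi_of_hasDerivAt_of_nonneg hcont hderiv g'nonneg htop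
  rw [key, hg0]
  rcases le_total x K with h | h
  · rw [min_eq_left h, max_eq_right (by linarith)]
    field_simp
    ring
  · rw [min_eq_right h, max_eq_left (by linarith)]
    field_simp
    ring
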